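/- arXiv:0911.5124 — 7 statements merged into one kernel-verified Lean document; each statement's English description precedes it below -/
import Mathlib

section
/- Let n be a positive integer or ω, A a nontrivial Boolean algebra, and X a subset of the nonzero elements of A. Then X is n-independent if and only if for every finite R ⊆ X and every ε : R → {0,1}, if ∏_{x ∈ R} x^{ε(x)} = 0, then there is R' ⊆ R with |R'| ≤ n such that ε(x) = 1 for all x ∈ R' and ∏R' = 0. -/
open scoped Classical

variable {A : Type*}

/-- ω-independence: `⊥ ∉ X`, (⊥1), (⊥3). -/
def OmegaIndep [BooleanAlgebra A] (X : Set A) : Prop :=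
  (⊥ : A) ∉ X ∧
  (∀ F : Finset A, F.Nonempty → ↑F ⊆ X → F.sup id ≠ ⊤) ∧
  (∀ F G : Finset A, F.Nonempty → G.Nonempty → ↑F ⊆ X → ↑G ⊆ X →
      F.inf id ≠ ⊥ → F.inf id ≤ G.sup id → (F ∩ G).Nonempty)

/-- n-independence: `⊥ ∉ X`, (⊥1), (⊥2)_n, (⊥3); `n = ⊤` codes ω. -/
def NIndep [BooleanAlgebra A] (n : ℕ∞) (X : Set A) : Prop :=
  (⊥ : A) ∉ X ∧
  (∀ F : Finset A, F.Nonempty → ↑F ⊆ X → F.sup id ≠ ⊤) ∧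
  (∀ F : Finset A, F.Nonempty → ↑F ⊆ X → F.inf id = ⊥ →
      ∃ F' ⊆ F, (F'.card : ℕ∞) ≤ n ∧ F'.inf id = ⊥) ∧
  (∀ F G : Finset A, F.Nonempty → G.Nonempty → ↑F ⊆ X → ↑G ⊆ X →
      F.inf id ≠ ⊥ → F.inf id ≤ G.sup id → (F ∩ G).Nonempty)

/-- Elementary product `∏_{x ∈ R} x^{ε x}`. -/
def elemProd [BooleanAlgebra A] (R : Finset A) (ε : A → Bool) : A :=
  R.inf (fun x => if ε x then x else xᶜ)

/-- `f` is n-preserving on `X` (`n = ⊤` codes ω-preserving). -/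
def NPreserving [BooleanAlgebra A] {B : Type*} [BooleanAlgebra B]
    (n : ℕ∞) (X : Set A) (f : A → B) : Prop :=
  ∀ F : Finset A, ↑F ⊆ X → (F.card : ℕ∞) ≤ n → F.inf id = ⊥ → F.inf f = ⊥

/-- Membership in the subalgebra generated by `X`. -/
inductive Gen [BooleanAlgebra A] (X : Set A) : A → Prop
  | of {x : A} : x ∈ X → Gen X x
  | bot : Gen X ⊥
  | top : Gen X ⊤
  | inf {x y : A} : Gen X x → Gen X y → Gen X (x ⊓ y)
  | sup {x y : A} : Gen X x → Gen X y → Gen X (x ⊔ y)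
  | compl {x : A} : Gen X x → Gen X xᶜ

/-- `X` generates the Boolean algebra `A`. -/
def Generates [BooleanAlgebra A] (X : Set A) : Prop := ∀ a : A, Gen X a

/-!
Splitting an elementary product by the sign of the exponents gives
`∏ x^{ε x} = ∏F ⊓ (∑G)ᶜ`, with `F` and `G` the positive and negative parts of `R`, so it
vanishes iff `∏F ≤ ∑G`. For an n-independent set, (⊥1) and (⊥3) then force `∏F = 0`, and
(⊥2)_n shrinks `F`. Conversely, applying the condition to `F ∪ G` with `ε` the indicator of
`F` yields (⊥1), (⊥2)_n and (⊥3) in the cases `F = ∅`, `G = ∅` and `F`, `G` disjoint.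
-/

section ElementaryProducts

variable [BooleanAlgebra A]

theorem elemProd_eq_inf_compl_sup (R : Finset A) (ε : A → Bool) :
    elemProd R ε = {x ∈ R | ε x}.inf id ⊓ ({x ∈ R | ¬ε x}.sup id)ᶜ := by
  have hsplit : R = {x ∈ R | ε x} ∪ {x ∈ R | ¬ε x} := (R.filter_union_filter_not_eq _).symm
  rw [elemProd, Finset.compl_sup]
  conv_lhs => rw [hsplit]
  rw [Finset.inf_union]
  congr 1 <;> refine Finset.inf_congr rfl fun x hx => ?_ <;> simp [(Finset.mem_filter.mp hx).2]

theorem elemProd_eq_bot_iff {R : Finset A} {ε : A → Bool} :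
    elemProd R ε = ⊥ ↔ {x ∈ R | ε x}.inf id ≤ {x ∈ R | ¬ε x}.sup id := by
  rw [elemProd_eq_inf_compl_sup, ← disjoint_iff, disjoint_compl_right_iff]

end ElementaryProducts

section Independence

variable [BooleanAlgebra A] {n : ℕ∞} {X : Set A}

theorem NIndep.inf_eq_bot_of_le_sup (h : NIndep n X) {F G : Finset A} (hFX : ↑F ⊆ X)
    (hGX : ↑G ⊆ X) (hFG : Disjoint F G) (hle : F.inf id ≤ G.sup id) : F.inf id = ⊥ := by
  obtain ⟨-, hsup, -, hmeet⟩ := h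
  by_contra hF
  rcases G.eq_empty_or_nonempty with rfl | hGne
  · exact hF (le_bot_iff.mp hle)
  rcases F.eq_empty_or_nonempty with rfl | hFne
  · exact hsup G hGne hGX (top_le_iff.mp hle)
  have hFG' := hmeet F G hFne hGne hFX hGX hF hle
  rw [Finset.disjoint_iff_inter_eq_empty.mp hFG] at hFG'
  exact Finset.not_nonempty_empty hFG'

theorem NIndep.exists_subset_inf_eq_bot_of_elemProd_eq_bot (h : NIndep n X) {R : Finset A}
    (hRX : ↑R ⊆ X) {ε : A → Bool} (hε : elemProd R ε = ⊥) :
    ∃ R' ⊆ R, (R'.card : ℕ∞) ≤ n ∧ (∀ x ∈ R', ε x = true) ∧ R'.inf id = ⊥ := by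
  set F := {x ∈ R | ε x}
  have hFR : F ⊆ R := Finset.filter_subset _ _
  have hFX : ↑F ⊆ X := (Finset.coe_subset.mpr hFR).trans hRX
  have hF : F.inf id = ⊥ :=
    h.inf_eq_bot_of_le_sup hFX ((Finset.coe_subset.mpr (Finset.filter_subset _ _)).trans hRX)
      (Finset.disjoint_filter_filter_not _ _ _) (elemProd_eq_bot_iff.mp hε)
  rcases F.eq_empty_or_nonempty with hFe | hFne
  · exact ⟨∅, Finset.empty_subset _, by simp, by simp, by rw [← hF, hFe]⟩
  · obtain ⟨-, -, hshrink, -⟩ := h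
    obtain ⟨F', hF'F, hcard, hinf⟩ := hshrink F hFne hFX hF
    exact ⟨F', hF'F.trans hFR, hcard, fun x hx => (Finset.mem_filter.mp (hF'F hx)).2, hinf⟩

theorem exists_subset_inf_eq_bot_of_le_sup
    (h : ∀ (R : Finset A), ↑R ⊆ X → ∀ ε : A → Bool, elemProd R ε = ⊥ →
      ∃ R' ⊆ R, (R'.card : ℕ∞) ≤ n ∧ (∀ x ∈ R', ε x = true) ∧ R'.inf id = ⊥)
    {F G : Finset A} (hFX : ↑F ⊆ X) (hGX : ↑G ⊆ X) (hFG : Disjoint F G)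
    (hle : F.inf id ≤ G.sup id) : ∃ R' ⊆ F, (R'.card : ℕ∞) ≤ n ∧ R'.inf id = ⊥ := by
  have hpos : {x ∈ F ∪ G | decide (x ∈ F)} = F := by
    ext x; simp
  have hneg : {x ∈ F ∪ G | ¬decide (x ∈ F)} = G := by
    ext x; by_cases hxF : x ∈ F <;> simp [hxF, Finset.disjoint_left.mp hFG]
  obtain ⟨R', hR', hcard, hpos', hinf⟩ := h (F ∪ G) (by simp [hFX, hGX])
    (fun x => decide (x ∈ F)) (by rw [elemProd_eq_bot_iff, hpos, hneg]; exact hle)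
  exact ⟨R', fun x hx => by simpa using hpos' x hx, hcard, hinf⟩

theorem nIndep_of_forall_elemProd_eq_bot (hX : ∀ x ∈ X, x ≠ ⊥)
    (h : ∀ (R : Finset A), ↑R ⊆ X → ∀ ε : A → Bool, elemProd R ε = ⊥ →
      ∃ R' ⊆ R, (R'.card : ℕ∞) ≤ n ∧ (∀ x ∈ R', ε x = true) ∧ R'.inf id = ⊥) :
    NIndep n X := by
  refine ⟨fun hbot => hX ⊥ hbot rfl, ?_, ?_, ?_⟩
  · intro F hFne hFX hsup
    obtain ⟨R', hR', -, hinf⟩ := exists_subset_inf_eq_bot_of_le_sup h (by simp)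
      hFX (Finset.disjoint_empty_left F) (by simp [hsup])
    obtain ⟨x, hx⟩ := hFne
    rw [Finset.subset_empty.mp hR', Finset.inf_empty] at hinf
    exact hX x (hFX hx) (eq_bot_iff.mpr (hinf ▸ le_top))
  · intro F _ hFX hF
    exact exists_subset_inf_eq_bot_of_le_sup h hFX (by simp)
      (Finset.disjoint_empty_right F) (by simp [hF])
  · intro F G _ _ hFX hGX hF hle
    by_contra hFG
    obtain ⟨R', hR', -, hinf⟩ := exists_subset_inf_eq_bot_of_le_sup h hFX hGX
      (Finset.disjoint_iff_inter_eq_empty.mpr (Finset.not_nonempty_iff_eq_empty.mp hFG)) hle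
    exact hF (eq_bot_iff.mpr (hinf ▸ Finset.inf_mono hR'))

end Independence

theorem stmt_2_general [BooleanAlgebra A] (n : ℕ∞)
    (X : Set A) (hX : ∀ x ∈ X, x ≠ ⊥) :
    NIndep n X ↔
    ∀ (R : Finset A), ↑R ⊆ X → ∀ ε : A → Bool, elemProd R ε = ⊥ →
      ∃ R' ⊆ R, (R'.card : ℕ∞) ≤ n ∧ (∀ x ∈ R', ε x = true) ∧ R'.inf id = ⊥ :=
  ⟨fun h _ hRX _ hε => h.exists_subset_inf_eq_bot_of_elemProd_eq_bot hRX hε,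
    nIndep_of_forall_elemProd_eq_bot hX⟩

/-- for `1 ≤ n ≤ ω`, `A` nontrivial, `X ⊆ A⁺`: `X` is n-independent iff
every zero elementary product has a subset of ≤ n positively-occurring elements with
zero product. -/
theorem stmt_2 [BooleanAlgebra A] [Nontrivial A] (n : ℕ∞) (hn : 1 ≤ n)
    (X : Set A) (hX : ∀ x ∈ X, x ≠ ⊥) :
    NIndep n X ↔
    ∀ (R : Finset A), ↑R ⊆ X → ∀ ε : A → Bool, elemProd R ε = ⊥ →
      ∃ R' ⊆ R, (R'.card : ℕ∞) ≤ n ∧ (∀ x ∈ R', ε x = true) ∧ R'.inf id = ⊥ :=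
  stmt_2_general n X hX
end

section
/- For any hypergraph G = ⟨V, E⟩ (with E ⊆ P(V) consisting of sets of size at least 2), the family {v_+ : v ∈ V}, where v_+ is the set of anticliques of G containing v, is an ω-independent subset of the power set algebra of the set of anticliques of G. -/
open scoped Classical

variable {A : Type*}

/-- A set of vertices is an anticlique if it includes no hyperedge. -/
def IsAnticlique {V : Type*} (E : Set (Set V)) (S : Set V) : Prop :=
  ∀ e ∈ E, ¬ e ⊆ S

/-!
Anticliques form a down-closed family containing every singleton (hyperedges have two
points). The singleton `{v}` lies in `v₊` and `∅` lies in no `v₊`, so no `v₊` is empty and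
no finite union of them is everything. If an anticlique `S` lies in
`⋂_{v ∈ F} v₊ ⊆ ⋃_{w ∈ G} w₊`, shrink it to the vertices `v ∈ S` with `v₊ ∈ F`: this is
still an anticlique in every `v₊ ∈ F`, so it contains some `w` with `w₊ ∈ G`, and then
`w₊ ∈ F ∩ G`.
-/

namespace DownClosedFamily

variable {V : Type*} {𝒜 : Set (Set V)}

/-- The paper's `v₊`. -/
def containing (𝒜 : Set (Set V)) (v : V) : Set 𝒜 := {S | v ∈ S.val}

lemma mem_finset_inf_iff {β : Type*} {F : Finset (Set β)} {x : β} :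
    x ∈ F.inf id ↔ ∀ a ∈ F, x ∈ a := by
  simp [Finset.inf_set_eq_iInter]

lemma mem_finset_sup_iff {β : Type*} {F : Finset (Set β)} {x : β} :
    x ∈ F.sup id ↔ ∃ a ∈ F, x ∈ a := by
  simp [Finset.sup_set_eq_biUnion]

lemma containing_nonempty (hsingle : ∀ v, {v} ∈ 𝒜) (v : V) :
    (containing 𝒜 v).Nonempty :=
  ⟨⟨{v}, hsingle v⟩, rfl⟩

lemma finset_sup_containing_ne_top (h𝒜 : IsLowerSet 𝒜) (hsingle : ∀ v, {v} ∈ 𝒜)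
    {F : Finset (Set 𝒜)} (hF : F.Nonempty) (hFX : ↑F ⊆ Set.range (containing 𝒜)) :
    F.sup id ≠ ⊤ := by
  obtain ⟨_, hv⟩ := hF
  obtain ⟨v, -⟩ := hFX hv
  have hempty : (∅ : Set V) ∈ 𝒜 := h𝒜 (Set.empty_subset {v}) (hsingle v)
  intro htop
  have hmem : (⟨∅, hempty⟩ : 𝒜) ∈ F.sup id := by simp [htop]
  obtain ⟨a, ha, hmem⟩ := mem_finset_sup_iff.1 hmem
  obtain ⟨w, rfl⟩ := hFX ha
  exact hmem

lemma finset_inter_nonempty_of_inf_le_sup (h𝒜 : IsLowerSet 𝒜)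
    {F G : Finset (Set 𝒜)} (hFX : ↑F ⊆ Set.range (containing 𝒜))
    (hGX : ↑G ⊆ Set.range (containing 𝒜)) (hF : F.inf id ≠ ⊥)
    (hle : F.inf id ≤ G.sup id) : (F ∩ G).Nonempty := by
  obtain ⟨S, hS⟩ := Set.nonempty_iff_ne_empty.2 hF
  set T : Set V := {u | u ∈ S.val ∧ containing 𝒜 u ∈ F}
  have hT : T ∈ 𝒜 := h𝒜 (fun _ hu => hu.1) S.prop
  have hTF : ⟨T, hT⟩ ∈ F.inf id := by
    refine mem_finset_inf_iff.2 fun a ha => ?_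
    obtain ⟨v, rfl⟩ := hFX ha
    exact ⟨mem_finset_inf_iff.1 hS _ ha, ha⟩
  obtain ⟨b, hbG, hTb⟩ := mem_finset_sup_iff.1 (hle hTF)
  obtain ⟨w, rfl⟩ := hGX hbG
  exact ⟨containing 𝒜 w, Finset.mem_inter.2 ⟨hTb.2, hbG⟩⟩

theorem omegaIndep_range_containing (h𝒜 : IsLowerSet 𝒜) (hsingle : ∀ v, {v} ∈ 𝒜) :
    OmegaIndep (Set.range (containing 𝒜)) := by
  refine ⟨?_, fun F hF hFX => finset_sup_containing_ne_top h𝒜 hsingle hF hFX,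
    fun F G _ _ hFX hGX => finset_inter_nonempty_of_inf_le_sup h𝒜 hFX hGX⟩
  rintro ⟨v, hv⟩
  exact (containing_nonempty hsingle v).ne_empty hv

end DownClosedFamily

lemma isLowerSet_setOf_isAnticlique {V : Type*} (E : Set (Set V)) :
    IsLowerSet {S | IsAnticlique E S} :=
  fun _ _ hTS hS e he heT => hS e he (heT.trans hTS)

lemma isAnticlique_singleton {V : Type*} {E : Set (Set V)} (hE : ∀ e ∈ E, e.Nontrivial)
    (v : V) : IsAnticlique E {v} :=
  fun e he hev => (hE e he).not_subset_singleton hev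

/-- for a hypergraph with all hyperedges of size ≥ 2, the family
`{v₊ : v ∈ V}` is ω-independent in the power set algebra of the anticliques. -/
theorem stmt_9 {V : Type*} (E : Set (Set V)) (hE : ∀ e ∈ E, e.Nontrivial) :
    OmegaIndep (Set.range
      (fun v : V => {p : {S : Set V // IsAnticlique E S} | v ∈ p.val})) :=
  DownClosedFamily.omegaIndep_range_containing (isLowerSet_setOf_isAnticlique E)
    (isAnticlique_singleton hE)
end

section
/- For any hypergraph G = ⟨V, E⟩ with all hyperedges of size at most n (and size at least 2), the family {v_+ : v ∈ V} of sets v_+ = {A anticlique of G : v ∈ A} is an n-independent subset of the power set algebra of the set of anticliques of G. -/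
open scoped Classical

variable {A : Type*}

/-!
A finite family of the sets `v₊` is the image of a finite vertex set `U`; its meet is the set of
anticliques including `U` and its join the set of anticliques meeting `U`. Hence the meet is empty
exactly when `U` includes a hyperedge, whose at most `n` vertices already give an empty meet.
If the meet is nonempty then `U` is itself an anticlique, and if the meet lies below the join over
`W`, then `U` meets `W`. The empty anticlique and the singletons (anticliques since hyperedges
have two vertices) show that no join of generators is everything and no generator is empty.
-/

theorem Finset.exists_image_eq_of_subset_range {α β : Type*} [DecidableEq β] {f : α → β}
    {t : Finset β} (h : ↑t ⊆ Set.range f) : ∃ s : Finset α, s.image f = t := by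
  rw [← Set.image_univ, Finset.subset_set_image_iff] at h
  obtain ⟨s, -, hs⟩ := h
  exact ⟨s, hs⟩

namespace IsAnticlique

variable {V : Type*} {E : Set (Set V)}

theorem mono {S T : Set V} (hS : IsAnticlique E S) (hTS : T ⊆ S) : IsAnticlique E T :=
  fun e he heT => hS e he (heT.trans hTS)

theorem empty (hE : ∀ e ∈ E, e.Nonempty) : IsAnticlique E ∅ :=
  fun e he he0 => (hE e he).ne_empty (Set.subset_empty_iff.mp he0)

theorem singleton (hE : ∀ e ∈ E, e.Nontrivial) (v : V) : IsAnticlique E {v} :=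
  fun e he hev => (hE e he).not_subset_singleton hev

end IsAnticlique

section Anticliques

variable {V : Type*} (E : Set (Set V))

/-- The paper's `v₊`. -/
def anticliquesContaining (v : V) : Set {S : Set V // IsAnticlique E S} :=
  {p | v ∈ p.val}

theorem inf_image_anticliquesContaining (U : Finset V) :
    (U.image (anticliquesContaining E)).inf id = {p | ↑U ⊆ p.val} := by
  ext p
  simp [Finset.inf_image, Finset.inf_set_eq_iInter, anticliquesContaining, Set.subset_def]

theorem sup_image_anticliquesContaining (U : Finset V) :
    (U.image (anticliquesContaining E)).sup id = {p | ∃ v ∈ U, v ∈ p.val} := by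
  ext p
  simp [Finset.sup_image, Finset.sup_set_eq_biUnion, anticliquesContaining]

theorem inf_image_anticliquesContaining_eq_bot_iff (U : Finset V) :
    (U.image (anticliquesContaining E)).inf id = ⊥ ↔ ¬ IsAnticlique E U := by
  rw [inf_image_anticliquesContaining, Set.bot_eq_empty, Set.eq_empty_iff_forall_notMem]
  exact ⟨fun h hU => h ⟨U, hU⟩ (Set.Subset.refl _), fun h p hp => h (p.2.mono hp)⟩

theorem bot_notMem_range_anticliquesContaining (hE : ∀ e ∈ E, e.Nontrivial) :
    ⊥ ∉ Set.range (anticliquesContaining E) := by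
  rintro ⟨v, hv⟩
  have hmem : ⟨{v}, IsAnticlique.singleton hE v⟩ ∈ anticliquesContaining E v := rfl
  rw [hv] at hmem
  exact hmem

theorem sup_image_anticliquesContaining_ne_top (hE : ∀ e ∈ E, e.Nonempty) (U : Finset V) :
    (U.image (anticliquesContaining E)).sup id ≠ ⊤ := by
  rw [sup_image_anticliquesContaining, Set.top_eq_univ, Set.ne_univ_iff_exists_notMem]
  exact ⟨⟨∅, IsAnticlique.empty hE⟩, by simp⟩

theorem exists_small_inf_image_anticliquesContaining_eq_bot {n : ℕ}
    (hE : ∀ e ∈ E, e.Finite ∧ e.ncard ≤ n) {U : Finset V}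
    (hU : (U.image (anticliquesContaining E)).inf id = ⊥) :
    ∃ U' ⊆ U, U'.card ≤ n ∧ (U'.image (anticliquesContaining E)).inf id = ⊥ := by
  rw [inf_image_anticliquesContaining_eq_bot_iff] at hU
  obtain ⟨e, he, heU⟩ : ∃ e ∈ E, e ⊆ U := by
    simpa [IsAnticlique] using hU
  obtain ⟨hfin, hcard⟩ := hE e he
  refine ⟨hfin.toFinset, by simpa using heU, ?_, ?_⟩
  · rwa [← Set.ncard_eq_toFinset_card e hfin]
  · rw [inf_image_anticliquesContaining_eq_bot_iff, Set.Finite.coe_toFinset]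
    exact fun h => h e he subset_rfl

theorem inter_nonempty_of_inf_le_sup {U W : Finset V}
    (hU : (U.image (anticliquesContaining E)).inf id ≠ ⊥)
    (hUW : (U.image (anticliquesContaining E)).inf id ≤ (W.image (anticliquesContaining E)).sup id) :
    (U.image (anticliquesContaining E) ∩ W.image (anticliquesContaining E)).Nonempty := by
  rw [Ne, inf_image_anticliquesContaining_eq_bot_iff, not_not] at hU
  have hmem : ⟨U, hU⟩ ∈ (U.image (anticliquesContaining E)).inf id := by
    rw [inf_image_anticliquesContaining]
    exact Set.Subset.refl _
  have hsup := hUW hmem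
  rw [sup_image_anticliquesContaining] at hsup
  obtain ⟨v, hvW, hvU⟩ := hsup
  exact ⟨anticliquesContaining E v, Finset.mem_inter.mpr
    ⟨Finset.mem_image_of_mem _ hvU, Finset.mem_image_of_mem _ hvW⟩⟩

end Anticliques

/-- for a hypergraph with all hyperedges of size ≤ n (and ≥ 2), the
family `{v₊ : v ∈ V}` is n-independent in the power set algebra of the anticliques. -/
theorem stmt_10 {V : Type*} (n : ℕ) (E : Set (Set V))
    (hE2 : ∀ e ∈ E, e.Nontrivial)
    (hEn : ∀ e ∈ E, e.Finite ∧ e.ncard ≤ n) :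
    NIndep (n : ℕ∞) (Set.range
      (fun v : V => {p : {S : Set V // IsAnticlique E S} | v ∈ p.val})) := by
  change NIndep n (Set.range (anticliquesContaining E))
  refine ⟨bot_notMem_range_anticliquesContaining E hE2, ?_, ?_, ?_⟩
  · intro F _ hF
    obtain ⟨U, rfl⟩ := Finset.exists_image_eq_of_subset_range hF
    exact sup_image_anticliquesContaining_ne_top E (fun e he => (hE2 e he).nonempty) U
  · intro F _ hF hbot
    obtain ⟨U, rfl⟩ := Finset.exists_image_eq_of_subset_range hF
    obtain ⟨U', hU'U, hcard, hU'⟩ := exists_small_inf_image_anticliquesContaining_eq_bot E hEn hbot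
    refine ⟨U'.image _, Finset.image_subset_image hU'U, ?_, hU'⟩
    exact_mod_cast Finset.card_image_le.trans hcard
  · intro F G _ _ hF hG hbot hle
    obtain ⟨U, rfl⟩ := Finset.exists_image_eq_of_subset_range hF
    obtain ⟨W, rfl⟩ := Finset.exists_image_eq_of_subset_range hG
    exact inter_nonempty_of_inf_le_sup E hbot hle
end

section
/- Let 2 ≤ n ≤ ω. If H ⊆ A and K ⊆ B are n-independent subsets of Boolean algebras A and B, then L = (H × {0}) ∪ ({0} × K) is an n-independent subset of the product Boolean algebra A × B. -/
open scoped Classical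

variable {A : Type*}

/-!
A finite `F ⊆ L` has the form `(S × {0}) ∪ ({0} × T)` with `S ⊆ H`, `T ⊆ K`, and `∑F = (∑S, ∑T)`.
If `S` and `T` are both nonempty, `∏F = 0` is already the product of two elements, one of each
kind: this is where `2 ≤ n` enters, and it makes the third condition vacuous for such `F`.
Otherwise `∏F` is `(∏S, 0)` or `(0, ∏T)`, and every condition reduces to the same one for `H`
or for `K`.
-/

section AxisUnion

open Finset

variable {B : Type*} [BooleanAlgebra A] [BooleanAlgebra B]

def axisUnion (H : Set A) (K : Set B) : Set (A × B) :=
  (fun h => (h, (⊥ : B))) '' H ∪ (fun k => ((⊥ : A), k)) '' K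

lemma nonempty_of_inf_id_eq_bot {F : Finset A} {a : A} (ha : a ≠ ⊥) (h : F.inf id = ⊥) :
    F.Nonempty := by
  rw [nonempty_iff_ne_empty]
  rintro rfl
  have := subsingleton_of_top_eq_bot h
  exact ha (Subsingleton.elim a ⊥)

lemma sup_image_inl (S : Finset A) : (S.image fun a => (a, (⊥ : B))).sup id = (S.sup id, ⊥) := by
  rw [sup_image]
  induction S using Finset.induction with
  | empty => rfl
  | insert a S _ ih => simp_all [Prod.sup_def]

lemma sup_image_inr (T : Finset B) : (T.image fun b => ((⊥ : A), b)).sup id = (⊥, T.sup id) := by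
  rw [sup_image]
  induction T using Finset.induction with
  | empty => rfl
  | insert b T _ ih => simp_all [Prod.sup_def]

lemma inf_image_inl {S : Finset A} (hS : S.Nonempty) :
    (S.image fun a => (a, (⊥ : B))).inf id = (S.inf id, ⊥) := by
  rw [inf_image]
  induction hS using Finset.Nonempty.cons_induction with
  | singleton => simp
  | cons a S _ _ ih => simp_all [Prod.inf_def]

lemma inf_image_inr {T : Finset B} (hT : T.Nonempty) :
    (T.image fun b => ((⊥ : A), b)).inf id = (⊥, T.inf id) := by
  rw [inf_image]
  induction hT using Finset.Nonempty.cons_induction with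
  | singleton => simp
  | cons b T _ _ ih => simp_all [Prod.inf_def]

lemma sup_image_inl_union_image_inr (S : Finset A) (T : Finset B) :
    (S.image (fun a => (a, ⊥)) ∪ T.image (fun b => (⊥, b))).sup id = (S.sup id, T.sup id) := by
  rw [sup_union, sup_image_inl, sup_image_inr, Prod.sup_def]
  simp

lemma inf_image_inl_union_image_inr_eq_bot {S : Finset A} {T : Finset B}
    (hS : S.Nonempty) (hT : T.Nonempty) :
    (S.image (fun a => (a, ⊥)) ∪ T.image (fun b => (⊥, b))).inf id = ⊥ := by
  rw [inf_union, inf_image_inl hS, inf_image_inr hT]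
  exact Prod.ext (inf_bot_eq _) (bot_inf_eq _)

lemma exists_eq_image_inl_union_image_inr {H : Set A} {K : Set B} {F : Finset (A × B)}
    (hF : ↑F ⊆ axisUnion H K) :
    ∃ S : Finset A, ∃ T : Finset B, ↑S ⊆ H ∧ ↑T ⊆ K ∧
      F = S.image (fun a => (a, ⊥)) ∪ T.image (fun b => (⊥, b)) := by
  have hF₁ : (↑(F.filter (· ∈ (fun a => (a, (⊥ : B))) '' H)) : Set (A × B)) ⊆
      (fun a => (a, ⊥)) '' H := fun p hp => (mem_filter.mp hp).2
  have hF₂ : (↑(F.filter (· ∉ (fun a => (a, (⊥ : B))) '' H)) : Set (A × B)) ⊆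
      (fun b => (⊥, b)) '' K := fun p hp =>
    (hF (mem_filter.mp hp).1).resolve_left (mem_filter.mp hp).2
  obtain ⟨S, hSH, hS⟩ := subset_set_image_iff.mp hF₁
  obtain ⟨T, hTK, hT⟩ := subset_set_image_iff.mp hF₂
  exact ⟨S, T, hSH, hTK, by rw [hS, hT, filter_union_filter_not_eq]⟩

namespace NIndep

variable {n : ℕ∞} {H : Set A} {K : Set B}

lemma bot_notMem_axisUnion (hH : NIndep n H) (hK : NIndep n K) : ⊥ ∉ axisUnion H K := by
  rintro (⟨h, hh, he⟩ | ⟨k, hk, he⟩)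
  · obtain rfl : h = ⊥ := congrArg Prod.fst he
    exact hH.1 hh
  · obtain rfl : k = ⊥ := congrArg Prod.snd he
    exact hK.1 hk

lemma axisUnion_sup_ne_top (hH : NIndep n H) (hK : NIndep n K) (F : Finset (A × B))
    (hF : F.Nonempty) (hFL : ↑F ⊆ axisUnion H K) : F.sup id ≠ ⊤ := by
  obtain ⟨S, T, hSH, hTK, rfl⟩ := exists_eq_image_inl_union_image_inr hFL
  rw [sup_image_inl_union_image_inr]
  intro htop
  rcases S.eq_empty_or_nonempty with rfl | hS
  · exact hK.2.1 T (by simpa using hF) hTK (congrArg Prod.snd htop)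
  · exact hH.2.1 S hS hSH (congrArg Prod.fst htop)

lemma exists_image_inl_inf_eq_bot (hH : NIndep n H) {S : Finset A} (hS : S.Nonempty)
    (hSH : ↑S ⊆ H) (h : S.inf id = ⊥) :
    ∃ F' ⊆ S.image (fun a => (a, (⊥ : B))), (F'.card : ℕ∞) ≤ n ∧ F'.inf id = ⊥ := by
  obtain ⟨S', hS'S, hcard, hS'⟩ := hH.2.2.1 S hS hSH h
  obtain ⟨s, hs⟩ := hS
  have hS'ne : S'.Nonempty := nonempty_of_inf_id_eq_bot (fun h => hH.1 (h ▸ hSH hs)) hS'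
  refine ⟨S'.image _, image_subset_image hS'S, ?_, ?_⟩
  · rwa [card_image_of_injective _ (Prod.mk_left_injective ⊥)]
  · rw [inf_image_inl hS'ne, hS']
    rfl

lemma exists_image_inr_inf_eq_bot (hK : NIndep n K) {T : Finset B} (hT : T.Nonempty)
    (hTK : ↑T ⊆ K) (h : T.inf id = ⊥) :
    ∃ F' ⊆ T.image (fun b => ((⊥ : A), b)), (F'.card : ℕ∞) ≤ n ∧ F'.inf id = ⊥ := by
  obtain ⟨T', hT'T, hcard, hT'⟩ := hK.2.2.1 T hT hTK h
  obtain ⟨t, ht⟩ := hT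
  have hT'ne : T'.Nonempty := nonempty_of_inf_id_eq_bot (fun h => hK.1 (h ▸ hTK ht)) hT'
  refine ⟨T'.image _, image_subset_image hT'T, ?_, ?_⟩
  · rwa [card_image_of_injective _ (Prod.mk_right_injective ⊥)]
  · rw [inf_image_inr hT'ne, hT']
    rfl

lemma axisUnion_exists_inf_eq_bot (hn : 2 ≤ n) (hH : NIndep n H) (hK : NIndep n K)
    (F : Finset (A × B)) (hF : F.Nonempty) (hFL : ↑F ⊆ axisUnion H K) (hinf : F.inf id = ⊥) :
    ∃ F' ⊆ F, (F'.card : ℕ∞) ≤ n ∧ F'.inf id = ⊥ := by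
  obtain ⟨S, T, hSH, hTK, rfl⟩ := exists_eq_image_inl_union_image_inr hFL
  rcases S.eq_empty_or_nonempty with rfl | hS <;> rcases T.eq_empty_or_nonempty with rfl | hT
  · simp at hF
  · simp only [image_empty, empty_union] at hinf ⊢
    rw [inf_image_inr hT] at hinf
    exact hK.exists_image_inr_inf_eq_bot hT hTK (congrArg Prod.snd hinf)
  · simp only [image_empty, union_empty] at hinf ⊢
    rw [inf_image_inl hS] at hinf
    exact hH.exists_image_inl_inf_eq_bot hS hSH (congrArg Prod.fst hinf)
  · obtain ⟨s, hs⟩ := hS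
    obtain ⟨t, ht⟩ := hT
    refine ⟨{(s, ⊥), (⊥, t)}, ?_, ?_, ?_⟩
    · exact insert_subset (mem_union_left _ (mem_image_of_mem _ hs))
        (singleton_subset_iff.mpr (mem_union_right _ (mem_image_of_mem _ ht)))
    · exact le_trans (by exact_mod_cast card_le_two) hn
    · simpa using inf_image_inl_union_image_inr_eq_bot (singleton_nonempty s) (singleton_nonempty t)

lemma image_inl_not_disjoint (hH : NIndep n H) {S S' : Finset A} (T' : Finset B)
    (hS : S.Nonempty) (hSH : ↑S ⊆ H) (hS'H : ↑S' ⊆ H) (hinf : S.inf id ≠ ⊥)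
    (hle : S.inf id ≤ S'.sup id) :
    ¬Disjoint (S.image (fun a => (a, ⊥)))
      (S'.image (fun a => (a, ⊥)) ∪ T'.image (fun b => (⊥, b))) := by
  have hS' : S'.Nonempty :=
    nonempty_iff_ne_empty.mpr (by rintro rfl; exact hinf (le_bot_iff.mp hle))
  obtain ⟨s, hs⟩ := hH.2.2.2 S S' hS hS' hSH hS'H hinf hle
  obtain ⟨hsS, hsS'⟩ := mem_inter.mp hs
  exact not_disjoint_iff.mpr
    ⟨(s, ⊥), mem_image_of_mem _ hsS, mem_union_left _ (mem_image_of_mem _ hsS')⟩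

lemma image_inr_not_disjoint (hK : NIndep n K) (S' : Finset A) {T T' : Finset B}
    (hT : T.Nonempty) (hTK : ↑T ⊆ K) (hT'K : ↑T' ⊆ K) (hinf : T.inf id ≠ ⊥)
    (hle : T.inf id ≤ T'.sup id) :
    ¬Disjoint (T.image (fun b => (⊥, b)))
      (S'.image (fun a => (a, ⊥)) ∪ T'.image (fun b => (⊥, b))) := by
  have hT' : T'.Nonempty :=
    nonempty_iff_ne_empty.mpr (by rintro rfl; exact hinf (le_bot_iff.mp hle))
  obtain ⟨t, ht⟩ := hK.2.2.2 T T' hT hT' hTK hT'K hinf hle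
  obtain ⟨htT, htT'⟩ := mem_inter.mp ht
  exact not_disjoint_iff.mpr
    ⟨(⊥, t), mem_image_of_mem _ htT, mem_union_right _ (mem_image_of_mem _ htT')⟩

lemma axisUnion_not_disjoint (hH : NIndep n H) (hK : NIndep n K) (F G : Finset (A × B))
    (hF : F.Nonempty) (hFL : ↑F ⊆ axisUnion H K) (hGL : ↑G ⊆ axisUnion H K)
    (hinf : F.inf id ≠ ⊥) (hle : F.inf id ≤ G.sup id) : ¬Disjoint F G := by
  obtain ⟨S, T, hSH, hTK, rfl⟩ := exists_eq_image_inl_union_image_inr hFL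
  obtain ⟨S', T', hS'H, hT'K, rfl⟩ := exists_eq_image_inl_union_image_inr hGL
  rw [sup_image_inl_union_image_inr] at hle
  rcases S.eq_empty_or_nonempty with rfl | hS <;> rcases T.eq_empty_or_nonempty with rfl | hT
  · simp at hF
  · simp only [image_empty, empty_union] at hinf hle ⊢
    rw [inf_image_inr hT] at hinf hle
    exact hK.image_inr_not_disjoint S' hT hTK hT'K (fun h => hinf (by rw [h]; rfl))
      (Prod.mk_le_mk.mp hle).2
  · simp only [image_empty, union_empty] at hinf hle ⊢
    rw [inf_image_inl hS] at hinf hle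
    exact hH.image_inl_not_disjoint T' hS hSH hS'H (fun h => hinf (by rw [h]; rfl))
      (Prod.mk_le_mk.mp hle).1
  · exact absurd (inf_image_inl_union_image_inr_eq_bot hS hT) hinf

end NIndep

end AxisUnion

/-- for `2 ≤ n ≤ ω`, if `H ⊆ A` and `K ⊆ B` are n-independent, then
`(H × {0}) ∪ ({0} × K)` is n-independent in `A × B`. -/
theorem stmt_11 {B : Type*} [BooleanAlgebra A] [BooleanAlgebra B]
    (n : ℕ∞) (hn : 2 ≤ n) (H : Set A) (K : Set B)
    (hH : NIndep n H) (hK : NIndep n K) :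
    NIndep n ((fun h => (h, (⊥ : B))) '' H ∪ (fun k => ((⊥ : A), k)) '' K) :=
  ⟨hH.bot_notMem_axisUnion hK, hH.axisUnion_sup_ne_top hK,
    hH.axisUnion_exists_inf_eq_bot hn hK,
    -- `(_)`: `NIndep` intersects with the classical `DecidableEq`, not `instDecidableEqProd`
    fun F G hF _ hFL hGL hinf hle => (@Finset.not_disjoint_iff_nonempty_inter _ (_) F G).mp
      (hH.axisUnion_not_disjoint hK F G hF hFL hGL hinf hle)⟩
end

section
/- Let B be a Boolean algebra, 2 ≤ n ≤ ω, and let H be an infinite n-independent subset of the nonzero elements of B. If H has an upper bound b with b < 1, then H ∪ {-b} is n-independent; consequently, if H is maximal among n-independent subsets of B⁺ and infinite, then ∑H = 1 (1 is the only upper bound of H). -/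
open scoped Classical

variable {A : Type*}

/-! If `b < ⊤` bounds `H`, then `bᶜ` is disjoint from every member of `H`, which settles (⊥2)
and (⊥3) for the enlarged set. The delicate clause is (⊥1): `bᶜ ⊔ ∑F = ⊤` with `F ⊆ H` finite
would put `b`, hence all of the infinite set `H`, below `∑F`, and a member of `H` outside `F`
below `∑F` contradicts (⊥3). Under maximality, `H ∪ {bᶜ} = H` for every upper bound `b < ⊤`,
so `bᶜ ≤ b`, which is absurd. -/

lemma Finset.coe_erase_subset_of_subset_union {α : Type*} [DecidableEq α] {s : Finset α}
    {t : Set α} {a : α} (hs : ↑s ⊆ t ∪ {a}) : ↑(s.erase a) ⊆ t := by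
  rw [Finset.coe_erase, Set.sdiff_singleton_subset_iff, Set.insert_eq, Set.union_comm]
  exact hs

lemma Finset.coe_subset_of_subset_union_of_notMem {α : Type*} [DecidableEq α] {s : Finset α}
    {t : Set α} {a : α} (hs : ↑s ⊆ t ∪ {a}) (ha : a ∉ s) : ↑s ⊆ t :=
  Finset.erase_eq_of_notMem ha ▸ Finset.coe_erase_subset_of_subset_union hs

lemma Finset.sup_le_sup_erase {α β : Type*} [DecidableEq α] [SemilatticeSup β] [OrderBot β]
    (s : Finset α) (f : α → β) (a : α) : s.sup f ≤ f a ⊔ (s.erase a).sup f :=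
  calc s.sup f ≤ (insert a (s.erase a)).sup f := Finset.sup_mono (Finset.insert_erase_subset a s)
    _ = f a ⊔ (s.erase a).sup f := Finset.sup_insert

namespace NIndep

variable [BooleanAlgebra A] {n : ℕ∞} {H : Set A} {b : A}

lemma bot_notMem (hH : NIndep n H) : (⊥ : A) ∉ H := hH.1

lemma sup_le_of_mem_upperBounds {F : Finset A} (hF : ↑F ⊆ H) (hub : b ∈ upperBounds H) :
    F.sup id ≤ b :=
  Finset.sup_le fun _ hx => hub (hF hx)

lemma inf_le_of_mem_upperBounds {F : Finset A} (hFne : F.Nonempty) (hF : ↑F ⊆ H)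
    (hub : b ∈ upperBounds H) : F.inf id ≤ b :=
  let ⟨_, hx⟩ := hFne
  (Finset.inf_le hx).trans (hub (hF hx))

lemma not_le_sup_of_infinite (hH : NIndep n H) (hinf : H.Infinite) (hub : b ∈ upperBounds H)
    {F : Finset A} (hF : ↑F ⊆ H) : ¬ b ≤ F.sup id := by
  intro hle
  obtain ⟨h, hhH, hhF⟩ := (hinf.sdiff F.finite_toSet).nonempty
  have hh0 : h ≠ ⊥ := fun h0 => hH.bot_notMem (h0 ▸ hhH)
  have hhle : h ≤ F.sup id := (hub hhH).trans hle
  rcases F.eq_empty_or_nonempty with rfl | hFne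
  · exact hh0 (le_bot_iff.mp hhle)
  · obtain ⟨y, hy⟩ := hH.2.2.2 {h} F (Finset.singleton_nonempty h) hFne (by simpa using hhH) hF
      (by simpa using hh0) (by simpa using hhle)
    rw [Finset.mem_inter, Finset.mem_singleton] at hy
    exact hhF (hy.1 ▸ hy.2)

lemma sup_ne_top_union_compl (hH : NIndep n H) (hinf : H.Infinite) (hub : b ∈ upperBounds H)
    {F : Finset A} (hF : ↑F ⊆ H ∪ {bᶜ}) : F.sup id ≠ ⊤ := by
  intro htop
  have hcodisj : Codisjoint bᶜ ((F.erase bᶜ).sup id) :=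
    codisjoint_iff.mpr (top_le_iff.mp (htop ▸ F.sup_le_sup_erase id bᶜ))
  exact hH.not_le_sup_of_infinite hinf hub (Finset.coe_erase_subset_of_subset_union hF)
    (by simpa using codisjoint_iff_compl_le_right.mp hcodisj)

lemma exists_small_inf_eq_bot_union_compl (hn : 2 ≤ n) (hH : NIndep n H)
    (hub : b ∈ upperBounds H) (hbtop : b ≠ ⊤) {F : Finset A} (hFne : F.Nonempty)
    (hF : ↑F ⊆ H ∪ {bᶜ}) (hFbot : F.inf id = ⊥) :
    ∃ F' ⊆ F, (F'.card : ℕ∞) ≤ n ∧ F'.inf id = ⊥ := by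
  by_cases hbF : bᶜ ∈ F
  · obtain ⟨h, hh⟩ : (F.erase bᶜ).Nonempty := by
      rw [Finset.nonempty_iff_ne_empty]
      intro he
      rw [← Finset.insert_erase hbF, he] at hFbot
      exact hbtop (by simpa using hFbot)
    have hhb : h ≤ b := hub (Finset.coe_erase_subset_of_subset_union hF hh)
    refine ⟨{h, bᶜ}, Finset.insert_subset (Finset.mem_of_mem_erase hh)
      (Finset.singleton_subset_iff.mpr hbF),
      le_trans (by exact_mod_cast Finset.card_le_two) hn, ?_⟩
    simpa using disjoint_iff.mp (disjoint_compl_right.mono_left hhb)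
  · exact hH.2.2.1 F hFne (Finset.coe_subset_of_subset_union_of_notMem hF hbF) hFbot

lemma inter_nonempty_union_compl (hH : NIndep n H) (hub : b ∈ upperBounds H)
    {F G : Finset A} (hFne : F.Nonempty) (hF : ↑F ⊆ H ∪ {bᶜ}) (hG : ↑G ⊆ H ∪ {bᶜ})
    (hFbot : F.inf id ≠ ⊥) (hFG : F.inf id ≤ G.sup id) : (F ∩ G).Nonempty := by
  by_cases hbF : bᶜ ∈ F
  · by_cases hbG : bᶜ ∈ G
    · exact ⟨bᶜ, Finset.mem_inter.mpr ⟨hbF, hbG⟩⟩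
    · have hFb : F.inf id ≤ b := hFG.trans
        (sup_le_of_mem_upperBounds (Finset.coe_subset_of_subset_union_of_notMem hG hbG) hub)
      exact absurd (disjoint_self.mp <|
        disjoint_compl_right.mono hFb (Finset.inf_le (f := id) hbF)) hFbot
  · have hFH := Finset.coe_subset_of_subset_union_of_notMem hF hbF
    -- `F.inf id` lies below `b`, so the summand `bᶜ` of `G.sup id` can be dropped
    have hFG₀ : F.inf id ≤ (G.erase bᶜ).sup id :=
      (disjoint_compl_right.mono_left
        (inf_le_of_mem_upperBounds hFne hFH hub)).left_le_of_le_sup_left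
          (hFG.trans (G.sup_le_sup_erase id bᶜ))
    have hG₀ : (G.erase bᶜ).Nonempty := by
      rw [Finset.nonempty_iff_ne_empty]
      rintro he
      simp only [he, Finset.sup_empty, le_bot_iff] at hFG₀
      exact hFbot hFG₀
    obtain ⟨y, hy⟩ := hH.2.2.2 F _ hFne hG₀ hFH (Finset.coe_erase_subset_of_subset_union hG)
      hFbot hFG₀
    exact ⟨y, Finset.inter_subset_inter_left (Finset.erase_subset _ _) hy⟩

theorem union_singleton_compl (hn : 2 ≤ n) (hH : NIndep n H) (hinf : H.Infinite)
    (hub : b ∈ upperBounds H) (hbtop : b ≠ ⊤) : NIndep n (H ∪ {bᶜ}) := by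
  refine ⟨?_, fun F _ hF => hH.sup_ne_top_union_compl hinf hub hF,
    fun F hFne hF hFbot => exists_small_inf_eq_bot_union_compl hn hH hub hbtop hFne hF hFbot,
    fun F G hFne _ hF hG hFbot hFG => hH.inter_nonempty_union_compl hub hFne hF hG hFbot hFG⟩
  rintro (h | h)
  · exact hH.bot_notMem h
  · exact hbtop (compl_eq_bot.mp (Set.mem_singleton_iff.mp h).symm)

theorem isLUB_top_of_maximal (hn : 2 ≤ n) (hH : NIndep n H) (hinf : H.Infinite)
    (hmax : ∀ Y : Set A, (∀ y ∈ Y, y ≠ ⊥) → NIndep n Y → H ⊆ Y → Y = H) : IsLUB H ⊤ := by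
  refine ⟨fun _ _ => le_top, fun b hub => top_le_iff.mpr ?_⟩
  by_contra hbtop
  have hY := hH.union_singleton_compl hn hinf hub hbtop
  have hbH : bᶜ ∈ H := hmax _ (fun y hy h0 => hY.bot_notMem (h0 ▸ hy)) hY Set.subset_union_left ▸
    Set.mem_union_right H rfl
  exact hbtop (compl_le_self.mp (hub hbH))

end NIndep

theorem stmt_12_general {B : Type*} [BooleanAlgebra B] (n : ℕ∞) (hn : 2 ≤ n)
    (H : Set B) (hH : NIndep n H) (hinf : H.Infinite) :
    (∀ b : B, b < ⊤ → (∀ h ∈ H, h ≤ b) → NIndep n (H ∪ {bᶜ})) ∧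
    ((∀ Y : Set B, (∀ y ∈ Y, y ≠ ⊥) → NIndep n Y → H ⊆ Y → Y = H) →
      IsLUB H ⊤) :=
  ⟨fun _ hbtop hub => hH.union_singleton_compl hn hinf hub hbtop.ne,
    hH.isLUB_top_of_maximal hn hinf⟩

/-- for `2 ≤ n ≤ ω` and an infinite n-independent `H ⊆ B⁺`: adjoining
`-b` for any upper bound `b < 1` keeps n-independence; hence if `H` is maximal among
n-independent subsets of `B⁺`, then `∑H = 1`, i.e. `⊤` is the least upper bound. -/
theorem stmt_12 {B : Type*} [BooleanAlgebra B] (n : ℕ∞) (hn : 2 ≤ n)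
    (H : Set B) (hH0 : ∀ x ∈ H, x ≠ ⊥) (hH : NIndep n H) (hinf : H.Infinite) :
    (∀ b : B, b < ⊤ → (∀ h ∈ H, h ≤ b) → NIndep n (H ∪ {bᶜ})) ∧
    ((∀ Y : Set B, (∀ y ∈ Y, y ≠ ⊥) → NIndep n Y → H ⊆ Y → Y = H) →
      IsLUB H ⊤) :=
  stmt_12_general n hn H hH hinf
end

section
/- Let 1 ≤ n ≤ ω and let X be a maximal n-independent subset of a Boolean algebra A. Then the set Y of nonzero elementary products of elements of X is weakly dense in A: for every a ∈ A⁺ there exists y ∈ Y with y ≤ a or y ≤ -a. -/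
/-!
If `a ∉ X`, maximality makes `X ∪ {a}` fail one of the clauses of n-independence, and each
possible failure produces disjoint finite `F, G ⊆ X` with `∏F ⊓ -∑G` below `a` or below `-a`,
and with `∏F ≠ 0`. Clauses (⊥1) and (⊥3) for `X` then force `∏F ⊓ -∑G ≠ 0`, and
`∏F ⊓ -∑G` is the elementary product over `F ∪ G` with exponent 1 exactly on `F`.
-/

open scoped Classical

variable {A : Type*}

lemma Finset.coe_erase_subset_of_subset_insert {α : Type*} {X : Set α} {a : α} {F : Finset α}
    (hF : ↑F ⊆ insert a X) : ↑(F.erase a) ⊆ X := by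
  intro x hx
  obtain ⟨hxa, hxF⟩ := Finset.mem_erase.mp hx
  exact (hF hxF).resolve_left hxa

section

variable [BooleanAlgebra A] {X : Set A} {a : A} {F G : Finset A}

def HasElemProdBelow (X : Set A) (b : A) : Prop :=
  ∃ (R : Finset A) (ε : A → Bool), ↑R ⊆ X ∧ elemProd R ε ≠ ⊥ ∧ elemProd R ε ≤ b

lemma elemProd_union_of_disjoint (hFG : Disjoint F G) :
    elemProd (F ∪ G) (fun x => decide (x ∈ F)) = F.inf id ⊓ (G.sup id)ᶜ := by
  rw [elemProd, Finset.inf_union, Finset.compl_sup]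
  congr 1
  · exact Finset.inf_congr rfl fun x hx => by simp [hx]
  · exact Finset.inf_congr rfl fun x hx => by simp [Finset.disjoint_right.mp hFG hx]

lemma Finset.sup_id_le_sup_sup_erase_id (F : Finset A) (a : A) :
    F.sup id ≤ a ⊔ (F.erase a).sup id := by
  simpa using Finset.sup_mono (f := id) (Finset.insert_erase_subset a F)

lemma Finset.inf_inf_erase_id_le_inf_id (F : Finset A) (a : A) :
    a ⊓ (F.erase a).inf id ≤ F.inf id := by
  simpa using Finset.inf_mono (f := id) (Finset.insert_erase_subset a F)

lemma NIndep.omegaIndep {n : ℕ∞} (hX : NIndep n X) : OmegaIndep X :=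
  ⟨hX.1, hX.2.1, hX.2.2.2⟩

namespace OmegaIndep

lemma inf_inf_compl_sup_ne_bot (hX : OmegaIndep X) (hF : ↑F ⊆ X) (hG : ↑G ⊆ X)
    (hFG : Disjoint F G) (hF₀ : F.inf id ≠ ⊥) : F.inf id ⊓ (G.sup id)ᶜ ≠ ⊥ := by
  intro h
  have hle : F.inf id ≤ G.sup id := disjoint_compl_right_iff.mp (disjoint_iff.mpr h)
  rcases G.eq_empty_or_nonempty with rfl | hGne
  · exact hF₀ (le_bot_iff.mp hle)
  rcases F.eq_empty_or_nonempty with rfl | hFne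
  · exact hX.2.1 G hGne hG (top_le_iff.mp hle)
  · obtain ⟨x, hx⟩ := hX.2.2 F G hFne hGne hF hG hF₀ hle
    exact Finset.disjoint_left.mp hFG (Finset.mem_inter.mp hx).1 (Finset.mem_inter.mp hx).2

lemma hasElemProdBelow (hX : OmegaIndep X) (hF : ↑F ⊆ X) (hG : ↑G ⊆ X)
    (hFG : Disjoint F G) (hF₀ : F.inf id ≠ ⊥) {b : A} (hb : F.inf id ⊓ (G.sup id)ᶜ ≤ b) :
    HasElemProdBelow X b := by
  refine ⟨F ∪ G, fun x => decide (x ∈ F), ?_, ?_, ?_⟩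
  · simpa using And.intro hF hG
  · rw [elemProd_union_of_disjoint hFG]
    exact hX.inf_inf_compl_sup_ne_bot hF hG hFG hF₀
  · rwa [elemProd_union_of_disjoint hFG]

lemma hasElemProdBelow_of_mem (hX : OmegaIndep X) (haX : a ∈ X) : HasElemProdBelow X a :=
  hX.hasElemProdBelow (F := {a}) (G := ∅) (by simpa using haX) (by simp) (by simp)
    (by simpa using ne_of_mem_of_not_mem haX hX.1) (by simp)

lemma hasElemProdBelow_of_le_sup_of_mem (hX : OmegaIndep X) (hF : ↑F ⊆ insert a X)
    (hG : ↑G ⊆ insert a X) (hFG : Disjoint F G) (hF₀ : F.inf id ≠ ⊥)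
    (hle : F.inf id ≤ G.sup id) (haG : a ∈ G) : HasElemProdBelow X a := by
  have hFX : ↑F ⊆ X := by
    simpa [Finset.erase_eq_of_notMem (Finset.disjoint_right.mp hFG haG)]
      using Finset.coe_erase_subset_of_subset_insert hF
  refine hX.hasElemProdBelow hFX (Finset.coe_erase_subset_of_subset_insert hG)
    (hFG.mono_right (Finset.erase_subset a G)) hF₀ ?_
  rw [← sdiff_eq, sdiff_le_iff, sup_comm]
  exact hle.trans (G.sup_id_le_sup_sup_erase_id a)

lemma hasElemProdBelow_compl_of_le_sup_of_not_mem (hX : OmegaIndep X) (hF : ↑F ⊆ insert a X)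
    (hG : ↑G ⊆ insert a X) (hFG : Disjoint F G) (hF₀ : F.inf id ≠ ⊥)
    (hle : F.inf id ≤ G.sup id) (haG : a ∉ G) : HasElemProdBelow X aᶜ := by
  have hGX : ↑G ⊆ X := by
    simpa [Finset.erase_eq_of_notMem haG] using Finset.coe_erase_subset_of_subset_insert hG
  refine hX.hasElemProdBelow (Finset.coe_erase_subset_of_subset_insert hF) hGX
    (hFG.mono_left (Finset.erase_subset a F))
    (ne_bot_of_le_ne_bot hF₀ (Finset.inf_mono (Finset.erase_subset a F))) ?_
  rw [le_compl_iff_disjoint_left, disjoint_iff, ← inf_assoc, ← le_bot_iff, ← sdiff_eq,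
    sdiff_le_iff, sup_bot_eq]
  exact (F.inf_inf_erase_id_le_inf_id a).trans hle

lemma hasElemProdBelow_of_sup_eq_top [Nontrivial A] (hX : OmegaIndep X) (hF : ↑F ⊆ insert a X)
    (htop : F.sup id = ⊤) : HasElemProdBelow X a := by
  refine hX.hasElemProdBelow (F := ∅) (G := F.erase a) (by simp)
    (Finset.coe_erase_subset_of_subset_insert hF) (by simp) (by simp) ?_
  rw [Finset.inf_empty, top_inf_eq, ← codisjoint_iff_compl_le_left, codisjoint_iff, eq_top_iff,
    ← htop]
  exact F.sup_id_le_sup_sup_erase_id a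

end OmegaIndep

lemma NIndep.hasElemProdBelow_compl_of_inf_eq_bot [Nontrivial A] {n : ℕ∞} (hX : NIndep n X)
    (hF : ↑F ⊆ insert a X) (hbot : F.inf id = ⊥)
    (hsmall : ¬ ∃ F' ⊆ F, (F'.card : ℕ∞) ≤ n ∧ F'.inf id = ⊥) : HasElemProdBelow X aᶜ := by
  have hF₀X := Finset.coe_erase_subset_of_subset_insert hF
  have hF₀ : (F.erase a).inf id ≠ ⊥ := by
    intro h
    rcases (F.erase a).eq_empty_or_nonempty with he | hne
    · simp [he] at h
    · obtain ⟨F', hF', hcard, hinf⟩ := hX.2.2.1 _ hne hF₀X h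
      exact hsmall ⟨F', hF'.trans (Finset.erase_subset a F), hcard, hinf⟩
  refine hX.omegaIndep.hasElemProdBelow (G := ∅) hF₀X (by simp) (by simp) hF₀ ?_
  rw [Finset.sup_empty, compl_bot, inf_top_eq, le_compl_iff_disjoint_left, disjoint_iff,
    ← le_bot_iff, ← hbot]
  exact F.inf_inf_erase_id_le_inf_id a

end

theorem stmt_15_general [BooleanAlgebra A] (n : ℕ∞)
    (X : Set A) (hX : NIndep n X)
    (hmax : ∀ Y : Set A, NIndep n Y → X ⊆ Y → Y = X) :
    ∀ a : A, a ≠ ⊥ → ∃ (R : Finset A) (ε : A → Bool), ↑R ⊆ X ∧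
      elemProd R ε ≠ ⊥ ∧ (elemProd R ε ≤ a ∨ elemProd R ε ≤ aᶜ) := by
  intro a ha
  have : Nontrivial A := nontrivial_of_ne a ⊥ ha
  suffices HasElemProdBelow X a ∨ HasElemProdBelow X aᶜ by
    rcases this with ⟨R, ε, hR, hne, hle⟩ | ⟨R, ε, hR, hne, hle⟩
    exacts [⟨R, ε, hR, hne, Or.inl hle⟩, ⟨R, ε, hR, hne, Or.inr hle⟩]
  by_cases haX : a ∈ X
  · exact Or.inl (hX.omegaIndep.hasElemProdBelow_of_mem haX)
  have hdep : ¬ NIndep n (insert a X) := fun h =>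
    haX (hmax _ h (Set.subset_insert a X) ▸ Set.mem_insert a X)
  simp only [NIndep, not_and_or, not_forall, not_not, exists_prop] at hdep
  rcases hdep with hbot | ⟨F, -, hF, htop⟩ | ⟨F, -, hF, hinf, hsmall⟩ |
    ⟨F, G, -, -, hF, hG, hF₀, hle, hFG⟩
  · exact absurd hbot (by simpa [eq_comm] using And.intro ha hX.1)
  · exact Or.inl (hX.omegaIndep.hasElemProdBelow_of_sup_eq_top hF htop)
  · exact Or.inr (hX.hasElemProdBelow_compl_of_inf_eq_bot hF hinf hsmall)
  · have hFG : Disjoint F G :=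
      Finset.disjoint_iff_inter_eq_empty.mpr (Finset.not_nonempty_iff_eq_empty.mp hFG)
    by_cases haG : a ∈ G
    · exact Or.inl (hX.omegaIndep.hasElemProdBelow_of_le_sup_of_mem hF hG hFG hF₀ hle haG)
    · exact Or.inr
        (hX.omegaIndep.hasElemProdBelow_compl_of_le_sup_of_not_mem hF hG hFG hF₀ hle haG)

/-- for `1 ≤ n ≤ ω`, if `X` is a maximal n-independent subset of `A`,
then the nonzero elementary products of elements of `X` are weakly dense in `A`. -/
theorem stmt_15 [BooleanAlgebra A] (n : ℕ∞) (hn : 1 ≤ n)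
    (X : Set A) (hX : NIndep n X)
    (hmax : ∀ Y : Set A, NIndep n Y → X ⊆ Y → Y = X) :
    ∀ a : A, a ≠ ⊥ → ∃ (R : Finset A) (ε : A → Bool), ↑R ⊆ X ∧
      elemProd R ε ≠ ⊥ ∧ (elemProd R ε ≤ a ∨ elemProd R ε ≤ aᶜ) :=
  stmt_15_general n X hX hmax
end

section
/- The set X = {({α}, x_α) : α < ω₁} ∪ {(1,0)} is a 3-independent generating set of the product Boolean algebra FinCo(ω₁) × Fr(ω₁), where ⟨x_α : α < ω₁⟩ is an independent generating set of Fr(ω₁); hence FinCo(ω₁) × Fr(ω₁) is 3-free. -/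
/-!
A product of elements of `X` that vanishes must contain `(1, 0)`, since otherwise its second
coordinate is a nonzero product of the independent `x_α`; its first coordinate `⋂ {α}` is then
empty only if two distinct singletons occur, so three factors already give `0`. If `∏ G ≤ ∑ H`
with `G`, `H` disjoint and `∏ G ≠ 0`, either `(1, 0) ∉ G` and the second coordinates contradict
independence, or `G ⊆ {(1, 0), ({a}, x_a)}` and the first coordinate of `∑ H`, the finite set of
indices occurring in `H`, would contain `W` (impossible for infinite `W`) or `a` (impossible by
disjointness). Finally `(1, 0)`
and the meets `({α}, x_α) ⊓ (1, 0) = ({α}, 0)` generate `FinCo(W) × 0`, and the meets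
`({α}, x_α) ⊓ (0, 1) = (0, x_α)` generate `0 × F`.
-/

open scoped Classical

variable {A : Type*}

/-- A Boolean subalgebra, as a set closed under the operations. -/
structure BoolSubalg (A : Type*) [BooleanAlgebra A] where
  carrier : Set A
  bot_mem : ⊥ ∈ carrier
  top_mem : ⊤ ∈ carrier
  inf_mem : ∀ {x y}, x ∈ carrier → y ∈ carrier → x ⊓ y ∈ carrier
  sup_mem : ∀ {x y}, x ∈ carrier → y ∈ carrier → x ⊔ y ∈ carrier
  compl_mem : ∀ {x}, x ∈ carrier → xᶜ ∈ carrier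

namespace BoolSubalg

variable {A : Type*} [BooleanAlgebra A]

instance : SetLike (BoolSubalg A) A where
  coe := carrier
  coe_injective := fun S T h => by cases S; cases T; congr

variable (S : BoolSubalg A)

instance : Max ↥S := ⟨fun x y => ⟨x.1 ⊔ y.1, S.sup_mem x.2 y.2⟩⟩
instance : Min ↥S := ⟨fun x y => ⟨x.1 ⊓ y.1, S.inf_mem x.2 y.2⟩⟩
instance : Top ↥S := ⟨⟨⊤, S.top_mem⟩⟩
instance : Bot ↥S := ⟨⟨⊥, S.bot_mem⟩⟩
instance : Compl ↥S := ⟨fun x => ⟨x.1ᶜ, S.compl_mem x.2⟩⟩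
instance : SDiff ↥S := ⟨fun x y => ⟨x.1 ⊓ y.1ᶜ, S.inf_mem x.2 (S.compl_mem y.2)⟩⟩
instance : HImp ↥S := ⟨fun x y => ⟨x.1ᶜ ⊔ y.1, S.sup_mem (S.compl_mem x.2) y.2⟩⟩

instance : BooleanAlgebra ↥S :=
  Subtype.coe_injective.booleanAlgebra Subtype.val Iff.rfl Iff.rfl (fun _ _ => rfl) (fun _ _ => rfl)
    rfl rfl (fun _ => rfl) (fun _ _ => sdiff_eq.symm)
    (fun _ _ => by rw [himp_eq, sup_comm]; rfl)

end BoolSubalg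

/-- The finite-cofinite algebra on `W`, as a subalgebra of the power set algebra. -/
def finCoAlg (W : Type*) : BoolSubalg (Set W) where
  carrier := {s | s.Finite ∨ sᶜ.Finite}
  bot_mem := Or.inl (Set.finite_empty)
  top_mem := Or.inr (by simp)
  inf_mem := by
    rintro x y (hx | hx) hy
    · exact Or.inl (hx.inter_of_left y)
    · rcases hy with hy | hy
      · exact Or.inl (hy.inter_of_right x)
      · exact Or.inr (by simpa [Set.compl_inter] using hx.union hy)
  sup_mem := by
    rintro x y hx (hy | hy)
    · rcases hx with hx | hx
      · exact Or.inl (hx.union hy)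
      · exact Or.inr (hx.subset (Set.compl_subset_compl.2 le_sup_left))
    · exact Or.inr (by
        have : (x ⊔ y)ᶜ = xᶜ ∩ yᶜ := by simp [Set.compl_union]
        rw [this]; exact hy.inter_of_right _)
  compl_mem := by rintro x (hx | hx)
                  · exact Or.inr (by simpa using hx)
                  · exact Or.inl hx

open Finset

section Generation

variable [BooleanAlgebra A] {X : Set A}

theorem Gen.finset_sup {ι : Type*} {s : Finset ι} {f : ι → A} (h : ∀ i ∈ s, Gen X (f i)) :
    Gen X (s.sup f) := by
  induction s using Finset.induction_on with
  | empty => exact Gen.bot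
  | insert i s _ ih =>
    rw [sup_insert]
    exact Gen.sup (h i (mem_insert_self i s)) (ih fun j hj => h j (mem_insert_of_mem hj))

/-- `f` is a Boolean hom onto the interval `[⊥, f ⊤]`: complements go to `f ⊤ ⊓ (f b)ᶜ`. -/
theorem Gen.map_latticeHom {B : Type*} [BooleanAlgebra B] {Y : Set B} (f : LatticeHom B A)
    (hbot : f ⊥ = ⊥) (htop : Gen X (f ⊤)) (hY : ∀ y ∈ Y, Gen X (f y)) {b : B} (hb : Gen Y b) :
    Gen X (f b) := by
  induction hb with
  | of hy => exact hY _ hy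
  | bot => exact hbot ▸ Gen.bot
  | top => exact htop
  | inf _ _ ihy ihz => rw [map_inf]; exact Gen.inf ihy ihz
  | sup _ _ ihy ihz => rw [map_sup]; exact Gen.sup ihy ihz
  | @compl y _ ih =>
    have hdisj : Disjoint (f yᶜ) (f y) := by
      rw [disjoint_iff, ← map_inf, compl_inf_eq_bot, hbot]
    have hcompl : f yᶜ = f ⊤ ⊓ (f y)ᶜ := by
      rw [← sdiff_eq, ← hdisj.sup_sdiff_cancel_right, ← map_sup, compl_sup_eq_top]
    exact hcompl ▸ Gen.inf htop (Gen.compl ih)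

theorem generates_prod {B : Type*} [BooleanAlgebra B] {X : Set (A × B)} {Y : Set A} {Z : Set B}
    (hY : Generates Y) (hZ : Generates Z) (htop : Gen X (⊤, ⊥))
    (hYX : ∀ y ∈ Y, Gen X (y, ⊥)) (hZX : ∀ z ∈ Z, Gen X (⊥, z)) : Generates X := by
  let inl : LatticeHom A (A × B) :=
    { toFun := fun a => (a, ⊥)
      map_sup' := fun _ _ => by simp
      map_inf' := fun _ _ => by simp }
  let inr : LatticeHom B (A × B) :=
    { toFun := fun b => (⊥, b)
      map_sup' := fun _ _ => by simp
      map_inf' := fun _ _ => by simp }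
  have hinr_top : Gen X (⊥, ⊤) :=
    (Prod.ext compl_top compl_bot : ((⊤, ⊥) : A × B)ᶜ = (⊥, ⊤)) ▸ htop.compl
  rintro ⟨a, b⟩
  have hsplit : ((a, b) : A × B) = inl a ⊔ inr b := by simp [inl, inr]
  exact hsplit ▸ Gen.sup (Gen.map_latticeHom inl rfl htop hYX (hY a))
    (Gen.map_latticeHom inr rfl hinr_top hZX (hZ b))

end Generation

namespace finCoAlg

variable {W : Type*}

def single (a : W) : ↥(finCoAlg W) := ⟨{a}, Or.inl (Set.finite_singleton a)⟩

theorem top_ne_bot [Nonempty W] : (⊤ : ↥(finCoAlg W)) ≠ ⊥ := fun h =>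
  Set.univ_nonempty.ne_empty (congrArg Subtype.val h)

theorem single_ne_bot (a : W) : single a ≠ ⊥ := fun h =>
  Set.singleton_ne_empty a (congrArg Subtype.val h)

theorem single_inf_single {a b : W} (hab : a ≠ b) : single a ⊓ single b = ⊥ :=
  Subtype.ext (Set.singleton_inter_eq_empty.mpr hab)

theorem single_le_finset_inf {T : Finset W} {a : W} (h : T ⊆ {a}) : single a ≤ T.inf single := by
  simpa using inf_mono (f := single) h

theorem coe_finset_sup_single (T : Finset W) :
    ((T.sup single : ↥(finCoAlg W)) : Set W) = T := by
  rw [apply_sup_eq_sup_comp Subtype.val (fun _ _ => rfl) rfl, sup_set_eq_biUnion]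
  ext a
  simp [single]

theorem generates_range_single : Generates (Set.range (single : W → ↥(finCoAlg W))) := by
  have hfin : ∀ u : ↥(finCoAlg W), (u : Set W).Finite → Gen (Set.range single) u := by
    intro u hu
    have hu_eq : u = hu.toFinset.sup single :=
      Subtype.ext (by rw [coe_finset_sup_single, hu.coe_toFinset])
    exact hu_eq ▸ Gen.finset_sup fun a _ => Gen.of ⟨a, rfl⟩
  intro u
  rcases u.2 with hu | hu
  · exact hfin u hu
  · simpa using (hfin uᶜ hu).compl

end finCoAlg

theorem Finset.inf_eq_inf_eraseNone [SemilatticeInf A] [OrderTop A] {ι : Type*}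
    {s : Finset (Option ι)} {g : Option ι → A} (h : none ∈ s → g none = ⊤) :
    s.inf g = s.eraseNone.inf (g ∘ some) := by
  refine le_antisymm (Finset.le_inf fun i hi => inf_le (mem_eraseNone.mp hi)) (Finset.le_inf ?_)
  rintro (_ | i) hi
  · exact h hi ▸ le_top
  · exact inf_le (f := g ∘ some) (mem_eraseNone.mpr hi)

theorem Finset.sup_eq_sup_eraseNone [SemilatticeSup A] [OrderBot A] {ι : Type*}
    {s : Finset (Option ι)} {g : Option ι → A} (h : none ∈ s → g none = ⊥) :
    s.sup g = s.eraseNone.sup (g ∘ some) :=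
  Finset.inf_eq_inf_eraseNone (A := Aᵒᵈ) h

theorem Finset.disjoint_eraseNone {ι : Type*} {s t : Finset (Option ι)} (h : Disjoint s t) :
    Disjoint s.eraseNone t.eraseNone :=
  disjoint_left.mpr fun _ hs ht => disjoint_left.mp h (mem_eraseNone.mp hs) (mem_eraseNone.mp ht)

theorem Finset.exists_subset_singleton_notMem {W : Type*} [Infinite W] {T T' : Finset W}
    (hT : #T ≤ 1) (hdisj : Disjoint T T') : ∃ a, T ⊆ {a} ∧ a ∉ T' := by
  rcases T.eq_empty_or_nonempty with rfl | ⟨a, ha⟩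
  · obtain ⟨a, ha⟩ := Infinite.exists_notMem_finset T'
    exact ⟨a, empty_subset _, ha⟩
  · obtain ⟨b, hb⟩ := card_le_one_iff_subset_singleton.mp hT
    obtain rfl : a = b := mem_singleton.mp (hb ha)
    exact ⟨a, hb, disjoint_left.mp hdisj ha⟩

section Independence

variable [BooleanAlgebra A] {W : Type*}

def BoolIndependent (x : W → A) : Prop :=
  ∀ R G : Finset W, Disjoint R G → R.inf x ⊓ G.inf (fun w => (x w)ᶜ) ≠ ⊥

variable {x : W → A}

theorem BoolIndependent.finset_inf_ne_bot (hx : BoolIndependent x) (S : Finset W) :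
    S.inf x ≠ ⊥ := by
  simpa using hx S ∅ (disjoint_empty_right S)

theorem BoolIndependent.not_finset_inf_le_sup (hx : BoolIndependent x) {S T : Finset W}
    (h : Disjoint S T) : ¬ S.inf x ≤ T.sup x := by
  rw [← disjoint_compl_right_iff, disjoint_iff, Finset.compl_sup]
  exact hx S T h

theorem BoolIndependent.finset_sup_ne_top (hx : BoolIndependent x) (T : Finset W) :
    T.sup x ≠ ⊤ := fun h =>
  hx.not_finset_inf_le_sup (disjoint_empty_left T) (by simp [h])

end Independence

theorem nIndep_range [BooleanAlgebra A] {ι : Type*} [DecidableEq ι] {E : ι → A}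
    (hE : Function.Injective E) (n : ℕ∞) (h0 : ∀ i, E i ≠ ⊥)
    (h1 : ∀ s : Finset ι, s.Nonempty → s.sup E ≠ ⊤)
    (h2 : ∀ s : Finset ι, s.Nonempty → s.inf E = ⊥ →
      ∃ s' ⊆ s, (#s' : ℕ∞) ≤ n ∧ s'.inf E = ⊥)
    (h3 : ∀ s t : Finset ι, s.Nonempty → t.Nonempty → s.inf E ≠ ⊥ → s.inf E ≤ t.sup E →
      (s ∩ t).Nonempty) :
    NIndep n (Set.range E) := by
  have hpre : ∀ G : Finset A, ↑G ⊆ Set.range E → ∃ s : Finset ι, s.image E = G := fun G hG =>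
    let ⟨s, _, hs⟩ := subset_set_image_iff.mp (Set.image_univ (f := E) ▸ hG)
    ⟨s, hs⟩
  refine ⟨fun ⟨i, hi⟩ => h0 i hi, ?_, ?_, ?_⟩
  · rintro G hG hGX
    obtain ⟨s, rfl⟩ := hpre G hGX
    simpa [sup_image] using h1 s (image_nonempty.mp hG)
  · rintro G hG hGX hbot
    obtain ⟨s, rfl⟩ := hpre G hGX
    rw [inf_image, Function.id_comp] at hbot
    obtain ⟨s', hs', hcard, hs'bot⟩ := h2 s (image_nonempty.mp hG) hbot
    refine ⟨s'.image E, image_subset_image hs', le_trans (by exact_mod_cast card_image_le) hcard,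
      by rwa [inf_image, Function.id_comp]⟩
  · rintro G H hG hH hGX hHX hbot hle
    obtain ⟨s, rfl⟩ := hpre G hGX
    obtain ⟨t, rfl⟩ := hpre H hHX
    rw [inf_image, Function.id_comp] at hbot hle
    rw [sup_image, Function.id_comp] at hle
    rw [← image_inter_of_injOn s t hE.injOn, image_nonempty]
    exact h3 s t (image_nonempty.mp hG) (image_nonempty.mp hH) hbot hle

section FinCoProd

variable {W : Type*} {F : Type*} [BooleanAlgebra F] {x : W → F}

/-- The set `{({α}, x_α) : α ∈ W} ∪ {(1, 0)}`, indexed by `Option W` with `none ↦ (1, 0)`. -/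
def finCoProdGen (x : W → F) : Option W → ↥(finCoAlg W) × F :=
  fun o => o.elim (⊤, ⊥) fun α => (finCoAlg.single α, x α)

theorem finCoProdGen_inf_fst (s : Finset (Option W)) :
    (s.inf (finCoProdGen x)).1 = s.eraseNone.inf finCoAlg.single := by
  rw [apply_inf_eq_inf_comp Prod.fst (fun _ _ => rfl) rfl, inf_eq_inf_eraseNone fun _ => rfl]
  rfl

theorem finCoProdGen_inf_snd {s : Finset (Option W)} (hs : none ∉ s) :
    (s.inf (finCoProdGen x)).2 = s.eraseNone.inf x := by
  rw [apply_inf_eq_inf_comp Prod.snd (fun _ _ => rfl) rfl,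
    inf_eq_inf_eraseNone fun h => absurd h hs]
  rfl

theorem finCoProdGen_sup_fst {s : Finset (Option W)} (hs : none ∉ s) :
    (s.sup (finCoProdGen x)).1 = s.eraseNone.sup finCoAlg.single := by
  rw [apply_sup_eq_sup_comp Prod.fst (fun _ _ => rfl) rfl,
    sup_eq_sup_eraseNone fun h => absurd h hs]
  rfl

theorem finCoProdGen_sup_snd (s : Finset (Option W)) :
    (s.sup (finCoProdGen x)).2 = s.eraseNone.sup x := by
  rw [apply_sup_eq_sup_comp Prod.snd (fun _ _ => rfl) rfl, sup_eq_sup_eraseNone fun _ => rfl]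
  rfl

/-- Two distinct singletons meet in `0` in the first coordinate, and `(1, 0)` kills the second. -/
theorem finCoProdGen_inf_eq_bot_iff [Nonempty W] (hx : BoolIndependent x) (s : Finset (Option W)) :
    s.inf (finCoProdGen x) = ⊥ ↔ none ∈ s ∧ 1 < #s.eraseNone := by
  constructor
  · intro hbot
    have hnone : none ∈ s := by
      by_contra hs
      exact hx.finset_inf_ne_bot s.eraseNone (by rw [← finCoProdGen_inf_snd hs, hbot]; rfl)
    refine ⟨hnone, not_le.mp fun hcard => ?_⟩
    obtain ⟨a, ha⟩ := card_le_one_iff_subset_singleton.mp hcard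
    have hle := finCoAlg.single_le_finset_inf ha
    rw [← finCoProdGen_inf_fst (x := x), hbot] at hle
    exact finCoAlg.single_ne_bot a (le_bot_iff.mp hle)
  · rintro ⟨hnone, hcard⟩
    obtain ⟨a, ha, b, hb, hab⟩ := one_lt_card.mp hcard
    refine le_bot_iff.mp ((le_inf (inf_le hnone) (le_inf (inf_le (mem_eraseNone.mp ha))
      (inf_le (mem_eraseNone.mp hb)))).trans_eq (Prod.ext ?_ ?_))
    · exact (top_inf_eq _).trans (finCoAlg.single_inf_single hab)
    · exact bot_inf_eq _

theorem finCoProdGen_inter_nonempty [Infinite W] (hx : BoolIndependent x)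
    {s t : Finset (Option W)} (hs : s.inf (finCoProdGen x) ≠ ⊥)
    (hle : s.inf (finCoProdGen x) ≤ t.sup (finCoProdGen x)) : (s ∩ t).Nonempty := by
  by_contra hst
  rw [not_nonempty_iff_eq_empty, ← disjoint_iff_inter_eq_empty] at hst
  by_cases hnone : none ∈ s
  · have hcard : #s.eraseNone ≤ 1 :=
      not_lt.mp fun h => hs ((finCoProdGen_inf_eq_bot_iff hx s).mpr ⟨hnone, h⟩)
    obtain ⟨a, ha, haT⟩ := exists_subset_singleton_notMem hcard (disjoint_eraseNone hst)
    have hfst := (Prod.le_def.mp hle).1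
    rw [finCoProdGen_inf_fst, finCoProdGen_sup_fst (disjoint_left.mp hst hnone)] at hfst
    have hmem : a ∈ ((t.eraseNone.sup finCoAlg.single : ↥(finCoAlg W)) : Set W) :=
      (finCoAlg.single_le_finset_inf ha).trans hfst (Set.mem_singleton a)
    rw [finCoAlg.coe_finset_sup_single] at hmem
    exact haT hmem
  · have hsnd := (Prod.le_def.mp hle).2
    rw [finCoProdGen_inf_snd hnone, finCoProdGen_sup_snd] at hsnd
    exact hx.not_finset_inf_le_sup (disjoint_eraseNone hst) hsnd

theorem nIndep_finCoProdGen [Infinite W] (hx : BoolIndependent x) :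
    NIndep 3 (Set.range (finCoProdGen x)) := by
  have hinj : Function.Injective (finCoProdGen x) :=
    Option.injective_iff.mpr ⟨fun a b h => Set.singleton_injective (congrArg (·.1.1) h),
      fun ⟨a, h⟩ => hx.finset_inf_ne_bot {a} (by simpa [finCoProdGen] using congrArg Prod.snd h)⟩
  refine nIndep_range hinj 3 ?_ (fun s _ h => ?_) (fun s _ hbot => ?_)
    (fun s t _ _ => finCoProdGen_inter_nonempty hx)
  · rintro (_ | a) h
    · exact finCoAlg.top_ne_bot (congrArg Prod.fst h)
    · exact hx.finset_inf_ne_bot {a} (by rw [inf_singleton]; exact congrArg Prod.snd h)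
  · exact hx.finset_sup_ne_top s.eraseNone (by rw [← finCoProdGen_sup_snd, h]; rfl)
  · obtain ⟨hnone, hcard⟩ := (finCoProdGen_inf_eq_bot_iff hx s).mp hbot
    obtain ⟨a, ha, b, hb, hab⟩ := one_lt_card.mp hcard
    refine ⟨{none, some a, some b}, ?_, ?_, (finCoProdGen_inf_eq_bot_iff hx _).mpr ⟨?_, ?_⟩⟩
    · simp [insert_subset_iff, hnone, mem_eraseNone.mp ha, mem_eraseNone.mp hb]
    · exact_mod_cast card_le_three
    · simp
    · exact one_lt_card.mpr ⟨a, by simp, b, by simp, hab⟩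

theorem generates_finCoProdGen (hx : Generates (Set.range x)) :
    Generates (Set.range (finCoProdGen x)) := by
  refine generates_prod finCoAlg.generates_range_single hx (Gen.of ⟨none, rfl⟩) ?_ ?_
  · rintro _ ⟨a, rfl⟩
    have h : (finCoAlg.single a, (⊥ : F)) = finCoProdGen x (some a) ⊓ finCoProdGen x none := by
      simp [finCoProdGen]
    exact h ▸ Gen.inf (Gen.of ⟨_, rfl⟩) (Gen.of ⟨_, rfl⟩)
  · rintro _ ⟨a, rfl⟩
    have h : ((⊥ : ↥(finCoAlg W)), x a) = finCoProdGen x (some a) ⊓ (finCoProdGen x none)ᶜ :=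
      Prod.ext (by simp [finCoProdGen]) (by simp [finCoProdGen])
    exact h ▸ Gen.inf (Gen.of ⟨_, rfl⟩) (Gen.compl (Gen.of ⟨none, rfl⟩))

end FinCoProd

/-- with `x : W → F` an independent generating family of `F ≅ Fr(ω₁)`
and `W` of size `ℵ₁`, the set `X = {({α}, x_α) : α ∈ W} ∪ {(1, 0)}` is a
3-independent generating set of `FinCo(ω₁) × Fr(ω₁)`; hence this product is 3-free. -/
theorem stmt_18 {W : Type} (hW : Cardinal.mk W = Cardinal.aleph 1)
    {F : Type} [BooleanAlgebra F] (x : W → F)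
    (hxgen : Generates (Set.range x))
    (hxind : ∀ R G : Finset W, Disjoint R G →
        R.inf x ⊓ G.inf (fun w => (x w)ᶜ) ≠ ⊥) :
    NIndep 3
      ((Set.range fun α : W =>
          ((⟨{α}, Or.inl (Set.finite_singleton α)⟩ : ↥(finCoAlg W)), x α)) ∪
        {((⊤ : ↥(finCoAlg W)), (⊥ : F))}) ∧
    Generates
      ((Set.range fun α : W =>
          ((⟨{α}, Or.inl (Set.finite_singleton α)⟩ : ↥(finCoAlg W)), x α)) ∪
        {((⊤ : ↥(finCoAlg W)), (⊥ : F))}) := by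
  have : Infinite W := Cardinal.infinite_iff.mpr (hW ▸ Cardinal.aleph0_le_aleph 1)
  rw [Set.union_singleton, ← Option.range_elim]
  exact ⟨nIndep_finCoProdGen hxind, generates_finCoProdGen hxgen⟩
end
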